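/- arXiv:2407.13741 — 3 statements merged into one kernel-verified Lean document; each statement's English description precedes it below -/
import Mathlib

section
/- Let (a_n) be a bounded sequence of real numbers with a_n ∈ [c², c] for all n, and suppose the Cesàro averages A_N = (1/N)∑_{n=1}^N a_n have both c² and c as limit points. Then the set of limit points of (A_N) is exactly the interval [c², c]. -/
open Filter Topology

theorem stmt_1 (c : ℝ) (hc0 : 0 ≤ c) (hc1 : c ≤ 1) (a : ℕ → ℝ)
    (hbound : ∀ n, c ^ 2 ≤ a n ∧ a n ≤ c)
    (A : ℕ → ℝ) (hA : ∀ N, A N = (∑ n ∈ Finset.Icc 1 N, a n) / N)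
    (hcl1 : MapClusterPt (c ^ 2) atTop A) (hcl2 : MapClusterPt c atTop A) :
    {x : ℝ | MapClusterPt x atTop A} = Set.Icc (c ^ 2) c := by
  classical
  have hcc : c ^ 2 ≤ c := by nlinarith
  -- A N ∈ [c^2, c] for N ≥ 1
  have hAmem : ∀ N : ℕ, 1 ≤ N → A N ∈ Set.Icc (c ^ 2) c := by
    intro N hN
    have hNpos : (0:ℝ) < N := by exact_mod_cast hN
    have hcard : (Finset.Icc 1 N).card = N := by simp
    have hlow : (N:ℝ) * c ^ 2 ≤ ∑ n ∈ Finset.Icc 1 N, a n := by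
      calc (N:ℝ) * c ^ 2 = ∑ _n ∈ Finset.Icc 1 N, c ^ 2 := by
            rw [Finset.sum_const, hcard]; ring
        _ ≤ _ := Finset.sum_le_sum fun i _ => (hbound i).1
    have hhigh : (∑ n ∈ Finset.Icc 1 N, a n) ≤ (N:ℝ) * c := by
      calc (∑ n ∈ Finset.Icc 1 N, a n) ≤ ∑ _n ∈ Finset.Icc 1 N, c :=
            Finset.sum_le_sum fun i _ => (hbound i).2
        _ = (N:ℝ) * c := by rw [Finset.sum_const, hcard]; ring
    rw [hA N]
    constructor
    · rw [le_div_iff₀ hNpos]; linarith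
    · rw [div_le_iff₀ hNpos]; linarith
  -- step estimate
  have hstep : ∀ N : ℕ, 1 ≤ N → |A (N + 1) - A N| ≤ 1 / N := by
    intro N hN
    have hNpos : (0:ℝ) < N := by exact_mod_cast hN
    have hN1pos : (0:ℝ) < (N:ℝ) + 1 := by linarith
    have hsum : (∑ n ∈ Finset.Icc 1 (N+1), a n) = (∑ n ∈ Finset.Icc 1 N, a n) + a (N+1) :=
      Finset.sum_Icc_succ_top (by omega) a
    have key : A (N + 1) - A N = (a (N + 1) - A N) / ((N:ℝ) + 1) := by
      have hAN : (∑ n ∈ Finset.Icc 1 N, a n) = (N:ℝ) * A N := by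
        rw [hA N]; field_simp
      rw [hA (N+1), hsum, hAN]
      push_cast
      field_simp
      ring
    rw [key, abs_div, abs_of_pos hN1pos]
    have h1 := hAmem N hN
    have h2 := hbound (N+1)
    have habs : |a (N + 1) - A N| ≤ 1 := by
      rw [abs_le]
      constructor
      · have := h1.2; nlinarith [h2.1]
      · have := h1.1; nlinarith [h2.2]
    calc |a (N + 1) - A N| / ((N:ℝ) + 1) ≤ 1 / ((N:ℝ) + 1) := by gcongr
      _ ≤ 1 / N := by apply one_div_le_one_div_of_le hNpos; linarith
  ext x
  simp only [Set.mem_setOf_eq]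
  constructor
  · intro hx
    have hmem : ∀ᶠ n in atTop, A n ∈ Set.Icc (c ^ 2) c := by
      filter_upwards [eventually_ge_atTop 1] with n hn using hAmem n hn
    have hle : Filter.map A atTop ≤ 𝓟 (Set.Icc (c ^ 2) c) :=
      le_principal_iff.mpr (mem_map.mpr hmem)
    have : ClusterPt x (𝓟 (Set.Icc (c ^ 2) c)) :=
      ClusterPt.mono hx hle
    have := mem_closure_iff_clusterPt.mpr this
    rwa [isClosed_Icc.closure_eq] at this
  · rintro ⟨hx1, hx2⟩
    rcases eq_or_lt_of_le hx1 with h1 | h1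
    · rwa [← h1]
    rcases eq_or_lt_of_le hx2 with h2 | h2
    · rwa [h2]
    rw [mapClusterPt_iff_frequently]
    intro s hs
    obtain ⟨ε, hε, hball⟩ := Metric.mem_nhds_iff.mp hs
    rw [frequently_atTop]
    intro M
    set M0 : ℕ := max (M + 1) (⌈1/ε⌉₊ + 1) with hM0
    have hM0pos : 1 ≤ M0 := le_trans (by omega) (le_max_left _ _)
    have hM0ε : 1 / (M0:ℝ) < ε := by
      have h1' : (⌈1/ε⌉₊ : ℝ) < M0 := by
        have : ⌈1/ε⌉₊ + 1 ≤ M0 := le_max_right _ _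
        exact_mod_cast by omega
      have h2' : 1/ε < (M0:ℝ) := lt_of_le_of_lt (Nat.le_ceil _) h1'
      calc 1 / (M0:ℝ) < 1 / (1/ε) := one_div_lt_one_div_of_lt (by positivity) h2'
        _ = ε := by field_simp
    -- find N1 ≥ M0 with A N1 < x
    have hf1 : ∃ᶠ n in atTop, A n ∈ Set.Iio x :=
      mapClusterPt_iff_frequently.mp hcl1 _ (Iio_mem_nhds h1)
    obtain ⟨N1, hN1ge, hN1⟩ := (frequently_atTop.mp hf1) M0
    -- find N2 ≥ N1 with x ≤ A N2
    have hf2 : ∃ᶠ n in atTop, A n ∈ Set.Ioi x :=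
      mapClusterPt_iff_frequently.mp hcl2 _ (Ioi_mem_nhds h2)
    obtain ⟨N2, hN2ge, hN2⟩ := (frequently_atTop.mp hf2) N1
    have hex : ∃ n, N1 ≤ n ∧ x ≤ A n := ⟨N2, hN2ge, le_of_lt hN2⟩
    have hNge : N1 ≤ Nat.find hex := (Nat.find_spec hex).1
    have hNx : x ≤ A (Nat.find hex) := (Nat.find_spec hex).2
    have hmin : ∀ m, m < Nat.find hex → ¬(N1 ≤ m ∧ x ≤ A m) := fun m hm => Nat.find_min hex hm
    generalize hgen : Nat.find hex = N at hNge hNx hmin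
    have hNne : N ≠ N1 := by
      intro h
      rw [h] at hNx
      exact absurd hNx (not_le.mpr hN1)
    have hNgt : N1 < N := lt_of_le_of_ne hNge (Ne.symm hNne)
    obtain ⟨K, rfl⟩ : ∃ K, N = K + 1 := ⟨N - 1, by omega⟩
    have hKge : N1 ≤ K := by omega
    have hAK : A K < x := by
      have := hmin K (by omega)
      push_neg at this
      exact this hKge
    have hK1 : 1 ≤ K := le_trans hM0pos (le_trans hN1ge hKge)
    have hKstep := hstep K hK1
    have hKε : 1 / (K:ℝ) < ε := by
      have hKM0 : (M0:ℝ) ≤ K := by exact_mod_cast le_trans hN1ge hKge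
      have : 1 / (K:ℝ) ≤ 1 / M0 := by
        apply one_div_le_one_div_of_le (by positivity) hKM0
      linarith
    refine ⟨K + 1, by omega, hball ?_⟩
    rw [Metric.mem_ball, Real.dist_eq, abs_lt]
    have habs := abs_le.mp hKstep
    exact ⟨by linarith [habs.1], by linarith [habs.2]⟩
end

section
/- Under the same block hypotheses, the Cesàro averages evaluated at N = N_{4k+3} tend to c. -/
open Filter Topology

theorem stmt_3 (c : ℝ) (hc0 : 0 < c) (hc1 : c < 1) (a : ℕ → ℝ)
    (hbound : ∀ n, c ^ 2 ≤ a n ∧ a n ≤ c)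
    (N : ℕ → ℕ) (hmono : StrictMono N)
    (hratio : Tendsto (fun m => (N (m + 1) : ℝ) / N m) atTop atTop)
    (hlow : ∀ k n, N (4 * k) ≤ n → n ≤ N (4 * k + 1) → a n = c ^ 2)
    (hhigh : ∀ k n, N (4 * k + 2) ≤ n → n ≤ N (4 * k + 3) → a n = c) :
    Tendsto (fun k => (∑ n ∈ Finset.Icc 1 (N (4 * k + 3)), a n) / (N (4 * k + 3) : ℝ))
      atTop (𝓝 c) := by
  have hNpos : ∀ m, 1 ≤ m → 0 < N m := fun m hm =>
    lt_of_lt_of_le (by omega) hmono.le_apply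
  have key : ∀ k, |(∑ n ∈ Finset.Icc 1 (N (4 * k + 3)), a n) / (N (4 * k + 3) : ℝ) - c|
      ≤ (N (4 * k + 2) : ℝ) / N (4 * k + 3) := by
    intro k
    set M2 := N (4 * k + 2) with hM2
    set M3 := N (4 * k + 3) with hM3
    have h23 : M2 ≤ M3 := (hmono.le_iff_le).mpr (by omega)
    have h3pos : (0 : ℝ) < M3 := by exact_mod_cast hNpos _ (by omega)
    have hsplit : ∑ n ∈ Finset.Icc 1 M3, a n
        = ∑ n ∈ Finset.Ioc 0 M2, a n + ∑ n ∈ Finset.Ioc M2 M3, a n := by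
      rw [show (1 : ℕ) = 0 + 1 from rfl, Finset.Icc_add_one_left_eq_Ioc,
        ← Finset.sum_Ioc_consecutive _ (Nat.zero_le _) h23]
    have htail : ∑ n ∈ Finset.Ioc M2 M3, a n = c * ((M3 : ℝ) - M2) := by
      have : ∑ n ∈ Finset.Ioc M2 M3, a n = ∑ _n ∈ Finset.Ioc M2 M3, c :=
        Finset.sum_congr rfl (fun n hn => by
          rw [Finset.mem_Ioc] at hn
          exact hhigh k n (le_of_lt hn.1) hn.2)
      rw [this, Finset.sum_const, Nat.card_Ioc, nsmul_eq_mul, Nat.cast_sub h23]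
      ring
    have hhead : |∑ n ∈ Finset.Ioc 0 M2, a n - c * M2| ≤ (M2 : ℝ) := by
      have : ∑ n ∈ Finset.Ioc 0 M2, a n - c * M2
          = ∑ n ∈ Finset.Ioc 0 M2, (a n - c) := by
        rw [Finset.sum_sub_distrib, Finset.sum_const, Nat.card_Ioc, Nat.sub_zero]
        push_cast
        ring
      rw [this]
      calc |∑ n ∈ Finset.Ioc 0 M2, (a n - c)| ≤ ∑ n ∈ Finset.Ioc 0 M2, |a n - c| :=
            Finset.abs_sum_le_sum_abs _ _
        _ ≤ ∑ n ∈ Finset.Ioc 0 M2, (1 : ℝ) := by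
            apply Finset.sum_le_sum
            intro n _
            rw [abs_sub_comm, abs_of_nonneg (by linarith [(hbound n).2])]
            have h1 := (hbound n).1
            nlinarith [(hbound n).2]
        _ = (M2 : ℝ) := by simp
    have heq : (∑ n ∈ Finset.Icc 1 M3, a n) / (M3 : ℝ) - c
        = (∑ n ∈ Finset.Ioc 0 M2, a n - c * M2) / M3 := by
      rw [hsplit, htail]
      field_simp
      ring
    rw [heq, abs_div, abs_of_pos h3pos]
    gcongr
  have hb : Tendsto (fun k => (N (4 * k + 2) : ℝ) / N (4 * k + 3)) atTop (𝓝 0) := by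
    have hc : Tendsto (fun k : ℕ => 4 * k + 2) atTop atTop :=
      tendsto_atTop_mono (fun k => by simp only [id_eq]; omega) tendsto_id
    have h1 : Tendsto (fun k => (N (4 * k + 3) : ℝ) / N (4 * k + 2)) atTop atTop :=
      hratio.comp hc
    have h2 := h1.inv_tendsto_atTop
    convert h2 using 2 with k
    simp [inv_div]
  have h0 : Tendsto (fun k => (∑ n ∈ Finset.Icc 1 (N (4 * k + 3)), a n) / (N (4 * k + 3) : ℝ) - c)
      atTop (𝓝 0) :=
    squeeze_zero_norm (fun k => by simpa [Real.norm_eq_abs] using key k) hb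
  have := h0.add_const c
  simpa using this
end

section
/- With heights h_j as above and the index sequence N_{4j} = h_{2j}, N_{4j+1} = 2j·h_{2j}, N_{4j+2} = h_{2j+1}, N_{4j+3} = 2j·h_{2j+1}, the ratios N_{m+1}/N_m tend to infinity along m → ∞. -/
/-! Within each block of four indices the ratio `N (m + 1) / N m` is at least `2 j` where
`m = 4 j + r`: it is exactly `2 j` for `r = 0, 2`, equal to `2 j + 1` for `r = 1`, and
`(2 j + 1) (2 j + 2) / (2 j)` for `r = 3`. Hence the ratio is at least `(m - 3) / 2`. -/

open Filter Topology

theorem pos_of_succ_eq_mul {h : ℕ → ℕ} (h1 : 0 < h 1)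
    (hrec : ∀ j, 1 ≤ j → h (j + 1) = j * (j + 1) * h j) {j : ℕ} (hj : 1 ≤ j) : 0 < h j := by
  induction j, hj using Nat.le_induction with
  | base => exact h1
  | succ n hn ih =>
    rw [hrec n hn]
    positivity

theorem pos_and_two_mul_le_succ {h N : ℕ → ℕ} (hpos : ∀ j, 1 ≤ j → 0 < h j)
    (hrec : ∀ j, 1 ≤ j → h (j + 1) = j * (j + 1) * h j)
    (hN0 : ∀ j, N (4 * j) = h (2 * j))
    (hN1 : ∀ j, N (4 * j + 1) = 2 * j * h (2 * j))
    (hN2 : ∀ j, N (4 * j + 2) = h (2 * j + 1))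
    (hN3 : ∀ j, N (4 * j + 3) = 2 * j * h (2 * j + 1)) {j r : ℕ} (hj : 1 ≤ j) (hr : r < 4) :
    0 < N (4 * j + r) ∧ 2 * j * N (4 * j + r) ≤ N (4 * j + r + 1) := by
  have hA : 0 < h (2 * j) := hpos _ (by omega)
  have hB : 0 < h (2 * j + 1) := hpos _ (by omega)
  have hAB : h (2 * j + 1) = (2 * j + 1) * (2 * j * h (2 * j)) := by
    rw [hrec _ (by omega)]; ring
  have hBC : h (2 * (j + 1)) = (2 * j + 1) * (2 * j + 2) * h (2 * j + 1) := hrec _ (by omega)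
  interval_cases r
  · rw [Nat.add_zero, hN0, hN1]
    exact ⟨hA, le_rfl⟩
  · rw [hN1, hN2, hAB]
    exact ⟨by positivity, Nat.mul_le_mul_right _ (by omega)⟩
  · rw [hN2, hN3]
    exact ⟨hB, le_rfl⟩
  · rw [show 4 * j + 3 + 1 = 4 * (j + 1) by ring, hN3, hN0, hBC, ← mul_assoc]
    exact ⟨by positivity, Nat.mul_le_mul_right _ (by nlinarith)⟩

theorem stmt_5 (h : ℕ → ℕ) (h1 : h 1 = 1)
    (hrec : ∀ j, 1 ≤ j → h (j + 1) = j * (j + 1) * h j)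
    (N : ℕ → ℕ)
    (hN0 : ∀ j, N (4 * j) = h (2 * j))
    (hN1 : ∀ j, N (4 * j + 1) = 2 * j * h (2 * j))
    (hN2 : ∀ j, N (4 * j + 2) = h (2 * j + 1))
    (hN3 : ∀ j, N (4 * j + 3) = 2 * j * h (2 * j + 1)) :
    Tendsto (fun m => (N (m + 1) : ℝ) / N m) atTop atTop := by
  have hpos : ∀ j, 1 ≤ j → 0 < h j := fun j => pos_of_succ_eq_mul (by omega) hrec
  have hlow : Tendsto (fun m : ℕ => ((m : ℝ) - 3) / 2) atTop atTop :=
    (tendsto_atTop_add_const_right _ (-3) tendsto_natCast_atTop_atTop).atTop_div_const two_pos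
  refine tendsto_atTop_mono' atTop ?_ hlow
  filter_upwards [eventually_ge_atTop 4] with m hm
  obtain ⟨j, r, hr, rfl⟩ : ∃ j r, r < 4 ∧ m = 4 * j + r :=
    ⟨m / 4, m % 4, Nat.mod_lt m (by norm_num), (Nat.div_add_mod m 4).symm⟩
  obtain ⟨hNpos, hle⟩ := pos_and_two_mul_le_succ hpos hrec hN0 hN1 hN2 hN3 (j := j) (by omega) hr
  rw [le_div_iff₀ (by exact_mod_cast hNpos)]
  calc (((4 * j + r : ℕ) : ℝ) - 3) / 2 * N (4 * j + r)
      ≤ (2 * j : ℕ) * N (4 * j + r) := by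
        gcongr
        have : (r : ℝ) ≤ 3 := by exact_mod_cast Nat.le_of_lt_succ hr
        push_cast; linarith
    _ ≤ N (4 * j + r + 1) := by exact_mod_cast hle
end
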